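/- Consider the iteration π_{i+1} = argmax_π M_i(π), where M_i(π) = L_{π_i}(π) − C·D_KL^max(π_i, π) and C = 2εγ/(1−γ)² with ε ≥ max_s |E_{a∼π(·|s)}[A_{π_i}(s,a)]| for all candidate policies π. Then the sequence of returns is monotonically nondecreasing: η(π_{i+1}) ≥ η(π_i) for all i. -/

import Mathlib

/-!
`M_i` minorizes `η` and touches it at `π_i`, so
`η (i+1) ≥ M_i (π_{i+1}) ≥ M_i (π_i) = η i`.

For the minorization, write `Ā(s) = E_{a ∼ π'}[A_π(s, a)]`. By the performance-difference identity
`η(π') - η(π) = ∑_t γ^t E_{s ∼ d'_t}[Ā(s)]`, while `L_π(π') - η(π)` is the same series with the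
state distributions `d_t` of `π` in place of those `d'_t` of `π'`. If `‖π'(s) - π(s)‖₁ ≤ δ` for
every `s`, then `‖d'_t - d_t‖₁ ≤ t δ`, and `|Ā| ≤ ε δ` because `E_{a ∼ π}[A_π] = 0` and
`|A_π| ≤ ε` pointwise (the bound on expectations under positive policies passes to point masses
in the limit); since `∑_t t γ^t = γ / (1 - γ)²`, the two series differ by at most
`ε δ² γ / (1 - γ)²`. Pinsker's inequality gives `δ² ≤ 2 D_KL^max(π, π')`, which turns this into
the penalty `C · D_KL^max`.
-/

open Finset

/-- State distribution at time `t` when executing policy `π`, starting from `ρ₀`. -/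
noncomputable def stateDist {S A : Type} [Fintype S] [Fintype A]
    (P : S → A → S → ℝ) (π : S → A → ℝ) (ρ₀ : S → ℝ) : ℕ → S → ℝ
  | 0 => ρ₀
  | (t+1) => fun s' => ∑ s, ∑ a, stateDist P π ρ₀ t s * π s a * P s a s'

/-- Unnormalized discounted state visitation frequency. -/
noncomputable def visit {S A : Type} [Fintype S] [Fintype A]
    (P : S → A → S → ℝ) (π : S → A → ℝ) (ρ₀ : S → ℝ) (γ : ℝ) (s : S) : ℝ :=
  ∑' t : ℕ, γ ^ t * stateDist P π ρ₀ t s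

/-- A (strictly positive) stochastic policy. -/
def IsPolicy {S A : Type} [Fintype A] (π : S → A → ℝ) : Prop :=
  (∀ s a, 0 < π s a) ∧ ∀ s, ∑ a, π s a = 1

open Filter Topology

theorem abs_sum_mul_le_sum_abs_mul {ι : Type*} (t : Finset ι) (x : ι → ℝ) {y : ι → ℝ} {M : ℝ}
    (hy : ∀ i ∈ t, |y i| ≤ M) : |∑ i ∈ t, x i * y i| ≤ (∑ i ∈ t, |x i|) * M := by
  rw [sum_mul]
  refine (abs_sum_le_sum_abs _ _).trans (sum_le_sum fun i hi => ?_)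
  rw [abs_mul]
  exact mul_le_mul_of_nonneg_left (hy i hi) (abs_nonneg _)

theorem summable_pow_mul_of_abs_le {γ M : ℝ} {u : ℕ → ℝ} (hγ0 : 0 ≤ γ) (hγ1 : γ < 1)
    (hu : ∀ t, |u t| ≤ M) : Summable fun t => γ ^ t * u t := by
  refine .of_norm_bounded ((summable_geometric_of_lt_one hγ0 hγ1).mul_right M) fun t => ?_
  rw [norm_mul, norm_pow, Real.norm_of_nonneg hγ0]
  exact mul_le_mul_of_nonneg_left (hu t) (pow_nonneg hγ0 t)

theorem Summable.hasSum_sub_succ {F : ℕ → ℝ} (hF : Summable F) :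
    HasSum (fun t => F t - F (t + 1)) (F 0) := by
  simpa using hF.hasSum.sub ((hasSum_nat_add_iff' 1).2 hF.hasSum)

theorem sum_mul_log_sum_div_sum_le {ι : Type*} (t : Finset ι) {p q : ι → ℝ}
    (hp : ∀ a ∈ t, 0 < p a) (hq : ∀ a ∈ t, 0 < q a) :
    (∑ a ∈ t, p a) * Real.log ((∑ a ∈ t, p a) / ∑ a ∈ t, q a)
      ≤ ∑ a ∈ t, p a * Real.log (p a / q a) := by
  rcases t.eq_empty_or_nonempty with rfl | ht
  · simp
  set P := ∑ a ∈ t, p a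
  set Q := ∑ a ∈ t, q a
  have hQ : 0 < Q := sum_pos hq ht
  have hterm : ∀ a ∈ t,
      p a * Real.log (P / Q) - p a * Real.log (p a / q a) ≤ q a * (P / Q) - p a := by
    intro a ha
    have hpa := hp a ha
    have hqa := hq a ha
    have hP : 0 < P := sum_pos hp ht
    have hlog : Real.log (P / Q) - Real.log (p a / q a) = Real.log (q a * P / (p a * Q)) := by
      rw [← Real.log_div (by positivity) (by positivity)]
      congr 1
      field_simp
    calc p a * Real.log (P / Q) - p a * Real.log (p a / q a)
        = p a * Real.log (q a * P / (p a * Q)) := by rw [← mul_sub, hlog]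
      _ ≤ p a * (q a * P / (p a * Q) - 1) :=
          mul_le_mul_of_nonneg_left (Real.log_le_sub_one_of_pos (by positivity)) hpa.le
      _ = q a * (P / Q) - p a := by field_simp
  have hsum := sum_le_sum hterm
  rw [sum_sub_distrib, sum_sub_distrib, ← sum_mul, ← sum_mul, mul_div_cancel₀ _ hQ.ne',
    sub_self] at hsum
  linarith

theorem binary_pinsker {x y : ℝ} (hy : 0 < y) (hyx : y ≤ x) (hx : x < 1) :
    2 * (x - y) ^ 2 ≤ x * Real.log (x / y) + (1 - x) * Real.log ((1 - x) / (1 - y)) := by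
  set f : ℝ → ℝ := fun t => x * (Real.log x - Real.log t)
    + (1 - x) * (Real.log (1 - x) - Real.log (1 - t)) - 2 * (x - t) ^ 2
  have hderiv : ∀ t ∈ Set.Ioo 0 1,
      HasDerivAt f (-(x * t⁻¹) + (1 - x) * (1 - t)⁻¹ + 4 * (x - t)) t := by
    rintro t ⟨ht0, ht1⟩
    have := ((((Real.hasDerivAt_log ht0.ne').const_sub (Real.log x)).const_mul x).add
      (((((hasDerivAt_id t).const_sub 1).log (by simp; linarith)).const_sub
        (Real.log (1 - x))).const_mul (1 - x))).sub
      (((hasDerivAt_id t).const_sub x).pow 2 |>.const_mul 2)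
    refine this.congr_deriv ?_
    simp only [id]
    field_simp [(by linarith : (1 - t) ≠ 0)]
    ring
  have hsub : Set.Icc y x ⊆ Set.Ioo 0 1 := fun t ht => ⟨hy.trans_le ht.1, ht.2.trans_lt hx⟩
  have hanti : AntitoneOn f (Set.Icc y x) := by
    refine antitoneOn_of_deriv_nonpos (convex_Icc y x)
      (fun t ht => (hderiv t (hsub ht)).continuousAt.continuousWithinAt)
      (fun t ht => (hderiv t (hsub (interior_subset ht))).differentiableAt.differentiableWithinAt)
      fun t ht => ?_
    rw [interior_Icc] at ht
    obtain ⟨ht0, ht1⟩ := hsub (Set.Ioo_subset_Icc_self ht)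
    rw [(hderiv t ⟨ht0, ht1⟩).deriv]
    have hpos : 0 < t * (1 - t) := mul_pos ht0 (by linarith)
    have hinv : 4 ≤ 1 / (t * (1 - t)) := by
      rw [le_div_iff₀ hpos]
      nlinarith [sq_nonneg (1 - 2 * t)]
    have heq : -(x * t⁻¹) + (1 - x) * (1 - t)⁻¹ + 4 * (x - t)
        = (x - t) * (4 - 1 / (t * (1 - t))) := by
      field_simp [(by linarith : (1 - t) ≠ 0)]
      ring
    rw [heq]
    exact mul_nonpos_of_nonneg_of_nonpos (by linarith [ht.2]) (by linarith)
  have h := hanti ⟨le_rfl, hyx⟩ ⟨hyx, le_rfl⟩ hyx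
  simp only [f, sub_self, mul_zero, add_zero, ne_eq, OfNat.ofNat_ne_zero, not_false_eq_true,
    zero_pow] at h
  rw [Real.log_div (by linarith) hy.ne', Real.log_div (by linarith) (by linarith)]
  linarith

theorem pinsker {ι : Type*} [Fintype ι] {p q : ι → ℝ} (hp : ∀ a, 0 < p a) (hq : ∀ a, 0 < q a)
    (hp1 : ∑ a, p a = 1) (hq1 : ∑ a, q a = 1) :
    (∑ a, |p a - q a|) ^ 2 ≤ 2 * ∑ a, p a * Real.log (p a / q a) := by
  classical
  -- reduce to the two-point distributions `(x, 1 - x)` and `(y, 1 - y)` of the event `B`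
  set B := univ.filter fun a => q a < p a
  set x := ∑ a ∈ B, p a
  set y := ∑ a ∈ B, q a
  have hpB : ∑ a ∈ Bᶜ, p a = 1 - x := by rw [← hp1, ← sum_add_sum_compl B p]; ring
  have hqB : ∑ a ∈ Bᶜ, q a = 1 - y := by rw [← hq1, ← sum_add_sum_compl B q]; ring
  have hl1 : ∑ a, |p a - q a| = 2 * (x - y) := by
    rw [← sum_add_sum_compl B,
      sum_congr rfl fun a ha => abs_of_pos (sub_pos.2 (mem_filter.1 ha).2),
      sum_congr rfl fun a ha => abs_of_nonpos (sub_nonpos.2 (not_lt.1 fun h =>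
        mem_compl.1 ha (mem_filter.2 ⟨mem_univ a, h⟩))),
      sum_sub_distrib, sum_neg_distrib, sum_sub_distrib, hpB, hqB]
    ring
  have hkl : x * Real.log (x / y) + (1 - x) * Real.log ((1 - x) / (1 - y))
      ≤ ∑ a, p a * Real.log (p a / q a) := by
    rw [← sum_add_sum_compl B, ← hpB, ← hqB]
    exact add_le_add (sum_mul_log_sum_div_sum_le B (fun a _ => hp a) fun a _ => hq a)
      (sum_mul_log_sum_div_sum_le Bᶜ (fun a _ => hp a) fun a _ => hq a)
  have hyx : y ≤ x := sum_le_sum fun a ha => (mem_filter.1 ha).2.le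
  rcases hyx.eq_or_lt with hxy | hxy
  · have hgibbs := sum_mul_log_sum_div_sum_le univ (fun a _ => hp a) fun a _ => hq a
    rw [hp1, hq1, div_one, Real.log_one, mul_zero] at hgibbs
    rw [hl1, hxy, sub_self]
    linarith
  have hy : 0 < y := by
    refine sum_pos (fun a _ => hq a) (nonempty_iff_ne_empty.2 fun hB => ?_)
    simp [x, y, hB] at hxy
  have hx : x < 1 := by
    rw [← sub_pos, ← hpB]
    refine sum_pos (fun a _ => hp a) (nonempty_iff_ne_empty.2 fun hB => ?_)
    rw [hB, sum_empty] at hpB hqB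
    linarith
  rw [hl1]
  nlinarith [binary_pinsker hy hyx hx]

theorem abs_le_of_forall_abs_sum_mul_le {ι : Type*} [Fintype ι] {f : ι → ℝ} {e : ℝ}
    (h : ∀ p : ι → ℝ, (∀ a, 0 < p a) → ∑ a, p a = 1 → |∑ a, p a * f a| ≤ e) (a : ι) :
    |f a| ≤ e := by
  classical
  set n : ℝ := (Fintype.card ι : ℝ)
  have hn : 0 < n := Nat.cast_pos.2 (Fintype.card_pos_iff.2 ⟨a⟩)
  -- approximate the point mass at `a` by positive weights
  set p : ℝ → ι → ℝ := fun θ b => θ / n + (1 - θ) * if b = a then 1 else 0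
  have hsum : ∀ θ, ∑ b, p θ b * f b = θ / n * ∑ b, f b + (1 - θ) * f a := by
    intro θ
    simp [p, add_mul, sum_add_distrib, mul_sum]
  have hlim : Tendsto (fun θ => |∑ b, p θ b * f b|) (𝓝[>] 0) (𝓝 |f a|) := by
    simp only [hsum]
    have : Continuous fun θ : ℝ => |θ / n * ∑ b, f b + (1 - θ) * f a| := by fun_prop
    simpa using (this.tendsto 0).mono_left nhdsWithin_le_nhds
  refine le_of_tendsto hlim (eventually_of_mem (Ioo_mem_nhdsGT one_pos) fun θ hθ => ?_)
  refine h (p θ) (fun b => ?_) ?_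
  · have : 0 ≤ (1 - θ) * if b = a then (1 : ℝ) else 0 :=
      mul_nonneg (sub_nonneg.2 hθ.2.le) (by split_ifs <;> norm_num)
    have : 0 < θ / n := div_pos hθ.1 hn
    simp only [p]
    linarith
  · simp only [p, sum_add_distrib, sum_const, card_univ, nsmul_eq_mul, ← mul_sum,
      sum_ite_eq', mem_univ, if_true]
    rw [mul_div_cancel₀ θ hn.ne']
    ring

section MDP

variable {S A : Type} [Fintype S] [Fintype A] {P : S → A → S → ℝ} {ρ₀ : S → ℝ}
  {π π' : S → A → ℝ} {γ : ℝ}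

theorem sum_stateDist_succ_mul (W : S → ℝ) (t : ℕ) :
    ∑ s', stateDist P π ρ₀ (t + 1) s' * W s'
      = ∑ s, stateDist P π ρ₀ t s * ∑ a, π s a * ∑ s', P s a s' * W s' := by
  simp only [stateDist, sum_mul, mul_sum]
  rw [sum_comm]
  refine sum_congr rfl fun s _ => ?_
  rw [sum_comm]
  exact sum_congr rfl fun a _ => sum_congr rfl fun s' _ => by ring

theorem stateDist_nonneg (hP : ∀ s a s', 0 ≤ P s a s') (hρ : ∀ s, 0 ≤ ρ₀ s)
    (hπ : IsPolicy π) : ∀ t s, 0 ≤ stateDist P π ρ₀ t s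
  | 0, s => hρ s
  | t + 1, s' => sum_nonneg fun s _ => sum_nonneg fun a _ =>
      mul_nonneg (mul_nonneg (stateDist_nonneg hP hρ hπ t s) (hπ.1 s a).le) (hP s a s')

theorem sum_stateDist (hP : ∀ s a, ∑ s', P s a s' = 1) (hρ : ∑ s, ρ₀ s = 1)
    (hπ : IsPolicy π) : ∀ t, ∑ s, stateDist P π ρ₀ t s = 1
  | 0 => hρ
  | t + 1 => by
    have h := sum_stateDist_succ_mul (P := P) (π := π) (ρ₀ := ρ₀) (fun _ => 1) t
    simp only [mul_one, hP, hπ.2] at h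
    rw [h, sum_stateDist hP hρ hπ t]

theorem stateDist_le_one (hP0 : ∀ s a s', 0 ≤ P s a s') (hP1 : ∀ s a, ∑ s', P s a s' = 1)
    (hρ0 : ∀ s, 0 ≤ ρ₀ s) (hρ1 : ∑ s, ρ₀ s = 1) (hπ : IsPolicy π) (t : ℕ) (s : S) :
    stateDist P π ρ₀ t s ≤ 1 :=
  sum_stateDist hP1 hρ1 hπ t ▸
    single_le_sum (fun s _ => stateDist_nonneg hP0 hρ0 hπ t s) (mem_univ s)

theorem abs_sum_stateDist_mul_le (hP0 : ∀ s a s', 0 ≤ P s a s')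
    (hP1 : ∀ s a, ∑ s', P s a s' = 1) (hρ0 : ∀ s, 0 ≤ ρ₀ s) (hρ1 : ∑ s, ρ₀ s = 1)
    (hπ : IsPolicy π) {f : S → ℝ} {M : ℝ} (hf : ∀ s, |f s| ≤ M) (t : ℕ) :
    |∑ s, stateDist P π ρ₀ t s * f s| ≤ M := by
  have h := abs_sum_mul_le_sum_abs_mul univ (stateDist P π ρ₀ t) fun s _ => hf s
  simp_rw [abs_of_nonneg (stateDist_nonneg hP0 hρ0 hπ t _), sum_stateDist hP1 hρ1 hπ,
    one_mul] at h
  exact h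

theorem sum_abs_sum_sum_mul_le (hP0 : ∀ s a s', 0 ≤ P s a s')
    (hP1 : ∀ s a, ∑ s', P s a s' = 1) (w : S → A → ℝ) :
    ∑ s', |∑ s, ∑ a, w s a * P s a s'| ≤ ∑ s, ∑ a, |w s a| :=
  calc ∑ s', |∑ s, ∑ a, w s a * P s a s'| ≤ ∑ s', ∑ s, ∑ a, |w s a| * P s a s' :=
        sum_le_sum fun s' _ => (abs_sum_le_sum_abs _ _).trans <| sum_le_sum fun s _ =>
          (abs_sum_le_sum_abs _ _).trans_eq <| sum_congr rfl fun a _ => by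
            rw [abs_mul, abs_of_nonneg (hP0 s a s')]
    _ = ∑ s, ∑ a, |w s a| := by
        rw [sum_comm]
        refine sum_congr rfl fun s _ => ?_
        rw [sum_comm]
        simp only [← mul_sum, hP1, mul_one]

theorem sum_abs_stateDist_sub_le (hP0 : ∀ s a s', 0 ≤ P s a s')
    (hP1 : ∀ s a, ∑ s', P s a s' = 1) (hρ0 : ∀ s, 0 ≤ ρ₀ s) (hρ1 : ∑ s, ρ₀ s = 1)
    (hπ : IsPolicy π) (hπ' : IsPolicy π') {δ : ℝ} (hδ : ∀ s, ∑ a, |π' s a - π s a| ≤ δ) :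
    ∀ t : ℕ, ∑ s, |stateDist P π' ρ₀ t s - stateDist P π ρ₀ t s| ≤ t * δ
  | 0 => by simp [stateDist]
  | t + 1 => by
    set d := stateDist P π ρ₀ t
    set d' := stateDist P π' ρ₀ t
    have hsplit : ∀ s a, |d' s * π' s a - d s * π s a|
        ≤ |d' s - d s| * π' s a + d s * |π' s a - π s a| := by
      intro s a
      rw [show d' s * π' s a - d s * π s a
          = (d' s - d s) * π' s a + d s * (π' s a - π s a) by ring]
      refine (abs_add_le _ _).trans_eq ?_
      rw [abs_mul, abs_mul, abs_of_pos (hπ'.1 s a),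
        abs_of_nonneg (stateDist_nonneg hP0 hρ0 hπ t s)]
    calc ∑ s', |stateDist P π' ρ₀ (t + 1) s' - stateDist P π ρ₀ (t + 1) s'|
        = ∑ s', |∑ s, ∑ a, (d' s * π' s a - d s * π s a) * P s a s'| := by
          simp only [stateDist, ← sum_sub_distrib, sub_mul, d, d']
      _ ≤ ∑ s, ∑ a, |d' s * π' s a - d s * π s a| := sum_abs_sum_sum_mul_le hP0 hP1 _
      _ ≤ ∑ s, ∑ a, (|d' s - d s| * π' s a + d s * |π' s a - π s a|) :=
          sum_le_sum fun s _ => sum_le_sum fun a _ => hsplit s a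
      _ = ∑ s, |d' s - d s| + ∑ s, d s * ∑ a, |π' s a - π s a| := by
          simp only [sum_add_distrib, ← mul_sum, hπ'.2, mul_one]
      _ ≤ t * δ + ∑ s, d s * δ :=
          add_le_add (sum_abs_stateDist_sub_le hP0 hP1 hρ0 hρ1 hπ hπ' hδ t) <|
            sum_le_sum fun s _ => mul_le_mul_of_nonneg_left (hδ s) (stateDist_nonneg hP0 hρ0 hπ t s)
      _ = (t + 1 : ℕ) * δ := by
          rw [← sum_mul, sum_stateDist hP1 hρ1 hπ]
          push_cast
          ring

def advantage (P : S → A → S → ℝ) (r : S → ℝ) (γ : ℝ) (V : S → ℝ) (s : S) (a : A) : ℝ :=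
  r s + γ * ∑ s', P s a s' * V s' - V s

theorem sum_mul_advantage_eq_zero {r V : S → ℝ} (hπ : ∀ s, ∑ a, π s a = 1)
    (hV : ∀ s, V s = ∑ a, π s a * (r s + γ * ∑ s', P s a s' * V s')) (s : S) :
    ∑ a, π s a * advantage P r γ V s a = 0 := by
  simp only [advantage, mul_sub, sum_sub_distrib, ← sum_mul, hπ, one_mul, ← hV, sub_self]

theorem hasSum_performance_difference (hγ0 : 0 ≤ γ) (hγ1 : γ < 1)
    (hP0 : ∀ s a s', 0 ≤ P s a s') (hP1 : ∀ s a, ∑ s', P s a s' = 1)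
    (hρ0 : ∀ s, 0 ≤ ρ₀ s) (hρ1 : ∑ s, ρ₀ s = 1) (hπ : IsPolicy π) {r V V' : S → ℝ}
    (hV' : ∀ s, V' s = ∑ a, π s a * (r s + γ * ∑ s', P s a s' * V' s')) :
    HasSum (fun t => γ ^ t * ∑ s, stateDist P π ρ₀ t s * ∑ a, π s a * advantage P r γ V s a)
      (∑ s, ρ₀ s * V' s - ∑ s, ρ₀ s * V s) := by
  set D := fun s => V' s - V s
  set u := fun t => ∑ s, stateDist P π ρ₀ t s * D s
  -- the expected advantage is `D - γ P_π D`, so the discounted series telescopes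
  have hadv : ∀ s, ∑ a, π s a * advantage P r γ V s a
      = D s - γ * ∑ a, π s a * ∑ s', P s a s' * D s' := by
    intro s
    have hVs : V s = ∑ a, π s a * V s := by rw [← sum_mul, hπ.2, one_mul]
    simp only [D]
    rw [hV' s, hVs, mul_sum, ← sum_sub_distrib, ← sum_sub_distrib]
    refine sum_congr rfl fun a _ => ?_
    simp only [advantage, mul_sub, sum_sub_distrib]
    ring
  have hterm : ∀ t, γ ^ t * ∑ s, stateDist P π ρ₀ t s * ∑ a, π s a * advantage P r γ V s a
      = γ ^ t * u t - γ ^ (t + 1) * u (t + 1) := by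
    intro t
    simp only [u, sum_stateDist_succ_mul, hadv, mul_sub, sum_sub_distrib, pow_succ, mul_sum]
    ring_nf
  have hu : ∀ t, |u t| ≤ ∑ s, |D s| := abs_sum_stateDist_mul_le hP0 hP1 hρ0 hρ1 hπ
    fun s => single_le_sum (fun s _ => abs_nonneg (D s)) (mem_univ s)
  convert (summable_pow_mul_of_abs_le hγ0 hγ1 hu).hasSum_sub_succ using 1
  · exact funext hterm
  · simp [u, D, stateDist, mul_sub]

theorem hasSum_sum_visit_mul (hγ0 : 0 ≤ γ) (hγ1 : γ < 1)
    (hP0 : ∀ s a s', 0 ≤ P s a s') (hP1 : ∀ s a, ∑ s', P s a s' = 1)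
    (hρ0 : ∀ s, 0 ≤ ρ₀ s) (hρ1 : ∑ s, ρ₀ s = 1) (hπ : IsPolicy π) (f : S → ℝ) :
    HasSum (fun t => γ ^ t * ∑ s, stateDist P π ρ₀ t s * f s)
      (∑ s, visit P π ρ₀ γ s * f s) := by
  have hvisit : ∀ s, HasSum (fun t => γ ^ t * stateDist P π ρ₀ t s) (visit P π ρ₀ γ s) :=
    fun s => (summable_pow_mul_of_abs_le hγ0 hγ1 fun t => by
      rw [abs_of_nonneg (stateDist_nonneg hP0 hρ0 hπ t s)]
      exact stateDist_le_one hP0 hP1 hρ0 hρ1 hπ t s).hasSum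
  refine (hasSum_sum fun s _ => (hvisit s).mul_right (f s)).congr_fun fun t => ?_
  simp only [mul_sum, mul_assoc]

theorem surrogate_sub_penalty_le_sum_mul_value (hγ0 : 0 ≤ γ) (hγ1 : γ < 1)
    (hP0 : ∀ s a s', 0 ≤ P s a s') (hP1 : ∀ s a, ∑ s', P s a s' = 1)
    (hρ0 : ∀ s, 0 ≤ ρ₀ s) (hρ1 : ∑ s, ρ₀ s = 1) (hπ : IsPolicy π) (hπ' : IsPolicy π')
    {r V V' : S → ℝ} (hV : ∀ s, V s = ∑ a, π s a * (r s + γ * ∑ s', P s a s' * V s'))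
    (hV' : ∀ s, V' s = ∑ a, π' s a * (r s + γ * ∑ s', P s a s' * V' s'))
    {ε D : ℝ} (hε : ∀ s a, |advantage P r γ V s a| ≤ ε)
    (hD : ∀ s, (∑ a, |π' s a - π s a|) ^ 2 ≤ D) :
    ∑ s, ρ₀ s * V s + ∑ s, visit P π ρ₀ γ s * ∑ a, π' s a * advantage P r γ V s a
      - ε * D * γ / (1 - γ) ^ 2 ≤ ∑ s, ρ₀ s * V' s := by
  obtain ⟨s₀, -, -⟩ := exists_ne_zero_of_sum_ne_zero (hρ1.symm ▸ one_ne_zero : ∑ s, ρ₀ s ≠ 0)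
  obtain ⟨a₀, -, -⟩ :=
    exists_ne_zero_of_sum_ne_zero ((hπ.2 s₀).symm ▸ one_ne_zero : ∑ a, π s₀ a ≠ 0)
  have hε0 : 0 ≤ ε := (abs_nonneg _).trans (hε s₀ a₀)
  set δ := √D
  have hδ : ∀ s, ∑ a, |π' s a - π s a| ≤ δ := fun s =>
    (le_abs_self _).trans (Real.abs_le_sqrt (hD s))
  have hδD : δ * δ = D := Real.mul_self_sqrt ((sq_nonneg _).trans (hD s₀))
  set Ā := fun s => ∑ a, π' s a * advantage P r γ V s a
  have hĀ : ∀ s, |Ā s| ≤ δ * ε := by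
    intro s
    have hĀs : Ā s = ∑ a, (π' s a - π s a) * advantage P r γ V s a := by
      simp only [Ā, sub_mul, sum_sub_distrib, sum_mul_advantage_eq_zero hπ.2 hV, sub_zero]
    rw [hĀs]
    exact (abs_sum_mul_le_sum_abs_mul _ _ fun a _ => hε s a).trans
      (mul_le_mul_of_nonneg_right (hδ s) hε0)
  have hterm : ∀ t : ℕ, -(ε * D) * (t * γ ^ t)
      ≤ γ ^ t * ∑ s, stateDist P π' ρ₀ t s * Ā s - γ ^ t * ∑ s, stateDist P π ρ₀ t s * Ā s := by
    intro t
    have hdrift : |∑ s, stateDist P π' ρ₀ t s * Ā s - ∑ s, stateDist P π ρ₀ t s * Ā s|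
        ≤ t * δ * (δ * ε) := by
      simp_rw [← sum_sub_distrib, ← sub_mul]
      exact (abs_sum_mul_le_sum_abs_mul _ _ fun s _ => hĀ s).trans
        (mul_le_mul_of_nonneg_right (sum_abs_stateDist_sub_le hP0 hP1 hρ0 hρ1 hπ hπ' hδ t)
          (mul_nonneg (Real.sqrt_nonneg D) hε0))
    have := mul_le_mul_of_nonneg_left (neg_le_of_abs_le hdrift) (pow_nonneg hγ0 t)
    rw [← hδD]
    linarith
  have hgeom : HasSum (fun t : ℕ => -(ε * D) * (t * γ ^ t)) (-(ε * D) * (γ / (1 - γ) ^ 2)) :=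
    (hasSum_coe_mul_geometric_of_norm_lt_one (𝕜 := ℝ) (by rwa [Real.norm_of_nonneg hγ0])).mul_left _
  have hgap := (hasSum_performance_difference hγ0 hγ1 hP0 hP1 hρ0 hρ1 hπ' hV' (V := V)).sub
    (hasSum_sum_visit_mul hγ0 hγ1 hP0 hP1 hρ0 hρ1 hπ Ā)
  have hle := hasSum_le hterm hgeom hgap
  have hpenalty : -(ε * D) * (γ / (1 - γ) ^ 2) = -(ε * D * γ / (1 - γ) ^ 2) := by ring
  linarith

end MDP

theorem stmt_9_general {S A : Type} [Fintype S] [Fintype A]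
    (P : S → A → S → ℝ) (r : S → ℝ) (ρ₀ : S → ℝ) (γ : ℝ)
    (πs : ℕ → S → A → ℝ) (V : ℕ → S → ℝ) (Q Aπ : ℕ → S → A → ℝ)
    (ε : ℕ → ℝ) (C : ℕ → ℝ) (η : ℕ → ℝ) (L M : ℕ → (S → A → ℝ) → ℝ)
    (Dmax : ℕ → (S → A → ℝ) → ℝ)
    (hγ0 : 0 < γ) (hγ1 : γ < 1)
    (hPpos : ∀ s a s', 0 ≤ P s a s') (hPsum : ∀ s a, ∑ s', P s a s' = 1)
    (hρpos : ∀ s, 0 ≤ ρ₀ s) (hρsum : ∑ s, ρ₀ s = 1)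
    (hπs : ∀ i, IsPolicy (πs i))
    (hV : ∀ i s, V i s = ∑ a, πs i s a * (r s + γ * ∑ s', P s a s' * V i s'))
    (hQ : ∀ i s a, Q i s a = r s + γ * ∑ s', P s a s' * V i s')
    (hA : ∀ i s a, Aπ i s a = Q i s a - V i s)
    (hε : ∀ i (π : S → A → ℝ), IsPolicy π → ∀ s, |∑ a, π s a * Aπ i s a| ≤ ε i)
    (hC : ∀ i, C i = 2 * ε i * γ / (1 - γ) ^ 2)
    (hη : ∀ i, η i = ∑ s, ρ₀ s * V i s)
    (hL : ∀ i (π : S → A → ℝ),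
      L i π = η i + ∑ s, visit P (πs i) ρ₀ γ s * ∑ a, π s a * Aπ i s a)
    (hDmax : ∀ i (π : S → A → ℝ),
      IsGreatest (Set.range fun s => ∑ a, πs i s a * Real.log (πs i s a / π s a))
        (Dmax i π))
    (hM : ∀ i (π : S → A → ℝ), M i π = L i π - C i * Dmax i π)
    -- π_{i+1} maximizes M_i over all stochastic policies:
    (hargmax : ∀ i (π : S → A → ℝ), IsPolicy π → M i π ≤ M i (πs (i+1))) :
    ∀ i, η i ≤ η (i+1) := by
  intro i
  have hAπ : Aπ i = advantage P r γ (V i) := by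
    funext s a
    rw [hA, hQ, advantage]
  have hAbs : ∀ s a, |advantage P r γ (V i) s a| ≤ ε i := fun s =>
    abs_le_of_forall_abs_sum_mul_le fun p hp hp1 =>
      hAπ ▸ hε i (fun _ => p) ⟨fun _ => hp, fun _ => hp1⟩ s
  have hl1 : ∀ s, (∑ a, |πs (i+1) s a - πs i s a|) ^ 2 ≤ 2 * Dmax i (πs (i+1)) := fun s => by
    simp_rw [abs_sub_comm (πs (i+1) s _)]
    linarith [pinsker ((hπs i).1 s) ((hπs (i+1)).1 s) ((hπs i).2 s) ((hπs (i+1)).2 s),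
      (hDmax i (πs (i+1))).2 ⟨s, rfl⟩]
  have hDself : Dmax i (πs i) = 0 := by
    obtain ⟨s, hs⟩ := (hDmax i (πs i)).1
    rw [← hs]
    simp [div_self ((hπs i).1 s _).ne']
  have hMself : M i (πs i) = η i := by
    simp [hM, hL, hDself, hAπ, sum_mul_advantage_eq_zero (hπs i).2 (hV i)]
  have hminorize := surrogate_sub_penalty_le_sum_mul_value hγ0.le hγ1 hPpos hPsum hρpos hρsum
    (hπs i) (hπs (i+1)) (hV i) (hV (i+1)) hAbs hl1
  have hstep := hargmax i (πs i) (hπs i)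
  rw [hMself, hM, hL, hC, hAπ] at hstep
  have hpenalty : 2 * ε i * γ / (1 - γ) ^ 2 * Dmax i (πs (i+1))
      = ε i * (2 * Dmax i (πs (i+1))) * γ / (1 - γ) ^ 2 := by ring
  rw [hη, hη]
  linarith

/-- Monotonic improvement of the MM-style iteration
π_{i+1} = argmax_π [ L_{π_i}(π) − C·D_KL^max(π_i, π) ]. -/
theorem stmt_9 {S A : Type} [Fintype S] [Fintype A] [Nonempty S]
    (P : S → A → S → ℝ) (r : S → ℝ) (ρ₀ : S → ℝ) (γ : ℝ)
    (πs : ℕ → S → A → ℝ) (V : ℕ → S → ℝ) (Q Aπ : ℕ → S → A → ℝ)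
    (ε : ℕ → ℝ) (C : ℕ → ℝ) (η : ℕ → ℝ) (L M : ℕ → (S → A → ℝ) → ℝ)
    (Dmax : ℕ → (S → A → ℝ) → ℝ)
    (hγ0 : 0 < γ) (hγ1 : γ < 1)
    (hPpos : ∀ s a s', 0 ≤ P s a s') (hPsum : ∀ s a, ∑ s', P s a s' = 1)
    (hρpos : ∀ s, 0 ≤ ρ₀ s) (hρsum : ∑ s, ρ₀ s = 1)
    (hπs : ∀ i, IsPolicy (πs i))
    (hV : ∀ i s, V i s = ∑ a, πs i s a * (r s + γ * ∑ s', P s a s' * V i s'))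
    (hQ : ∀ i s a, Q i s a = r s + γ * ∑ s', P s a s' * V i s')
    (hA : ∀ i s a, Aπ i s a = Q i s a - V i s)
    (hε : ∀ i (π : S → A → ℝ), IsPolicy π → ∀ s, |∑ a, π s a * Aπ i s a| ≤ ε i)
    (hC : ∀ i, C i = 2 * ε i * γ / (1 - γ) ^ 2)
    (hη : ∀ i, η i = ∑ s, ρ₀ s * V i s)
    (hL : ∀ i (π : S → A → ℝ),
      L i π = η i + ∑ s, visit P (πs i) ρ₀ γ s * ∑ a, π s a * Aπ i s a)
    (hDmax : ∀ i (π : S → A → ℝ),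
      IsGreatest (Set.range fun s => ∑ a, πs i s a * Real.log (πs i s a / π s a))
        (Dmax i π))
    (hM : ∀ i (π : S → A → ℝ), M i π = L i π - C i * Dmax i π)
    -- π_{i+1} maximizes M_i over all stochastic policies:
    (hargmax : ∀ i (π : S → A → ℝ), IsPolicy π → M i π ≤ M i (πs (i+1))) :
    ∀ i, η i ≤ η (i+1) :=
  stmt_9_general P r ρ₀ γ πs V Q Aπ ε C η L M Dmax hγ0 hγ1 hPpos hPsum hρpos hρsum hπs hV hQ hA hε
    hC hη hL hDmax hM hargmax
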